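/- arXiv:0907.2587 — 5 statements merged into one kernel-verified Lean document; each statement's English description precedes it below -/
import Mathlib

section
/- Let (F_l)_{l ∈ -ℕ} be a decreasing sequence of sub-σ-fields (F_0 ⊇ F_{-1} ⊇ …) and let G be a sub-σ-field. If F_0 is independent of G, then ⋂_{l} (F_l ∨ G) = (⋂_{l} F_l) ∨ G (up to null sets). -/
/-!
Work in `L²(μ)` and write `F∞ = ⨅ l, F l`. Let `g` lie in every `L²(F l ⊔ G)` and be orthogonal
to `L²(F∞ ⊔ G)`. For `B ∈ F 0` and `C ∈ G`, independence gives
`E[1_{B ∩ C} | F l ⊔ G] = 1_C • E[1_B | F l]`, hence `⟪1_{B ∩ C}, g⟫ = ⟪1_C • E[1_B | F l], g⟫`.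
The projections `E[1_B | F l]` onto the decreasing subspaces `L²(F l)` converge to the projection
onto their intersection, which is `L²(F∞)`; in the limit
`⟪1_{B ∩ C}, g⟫ = ⟪1_C • E[1_B | F∞], g⟫ = 0`.
The sets `B ∩ C` generate `F 0 ⊔ G`, to which `g` is adapted, so `g = 0`. Hence
`⨅ l, L²(F l ⊔ G) = L²(F∞ ⊔ G)`, and indicators of sets turn this into the statement.
-/

open MeasureTheory ProbabilityTheory

/-- Equality of two sub-σ-fields modulo `μ`-null sets: every set measurable for one
differs from some set measurable for the other by a `μ`-null set. -/
def EqModNull {Ω : Type*} {m : MeasurableSpace Ω} (μ : Measure Ω)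
    (m₁ m₂ : MeasurableSpace Ω) : Prop :=
  (∀ s, MeasurableSet[m₁] s → ∃ t, MeasurableSet[m₂] t ∧ μ (symmDiff s t) = 0) ∧
  (∀ s, MeasurableSet[m₂] s → ∃ t, MeasurableSet[m₁] t ∧ μ (symmDiff s t) = 0)

open Filter Topology Set

theorem Submodule.starProjection_tendsto_iInf {𝕜 E : Type*} [RCLike 𝕜] [NormedAddCommGroup E]
    [InnerProductSpace 𝕜 E] [CompleteSpace E] {ι : Type*} [Preorder ι]
    (U : ι → Submodule 𝕜 E) [∀ i, (U i).HasOrthogonalProjection]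
    [(⨅ i, U i).HasOrthogonalProjection] (hU : Antitone U) (x : E) :
    Tendsto (fun i => (U i).starProjection x) atTop (𝓝 ((⨅ i, U i).starProjection x)) := by
  have hclosure : (⨆ i, (U i)ᗮ).topologicalClosure = (⨅ i, U i)ᗮ := by
    rw [← Submodule.orthogonal_orthogonal_eq_closure, ← Submodule.iInf_orthogonal]
    simp_rw [Submodule.orthogonal_orthogonal]
  have key := starProjection_tendsto_closure_iSup (fun i => (U i)ᗮ)
    (fun i j hij => Submodule.orthogonal_le (hU hij)) x
  simp only [hclosure, starProjection_orthogonal_val] at key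
  simpa using (tendsto_const_nhds (x := x)).sub key

section

-- `m` comes last so that it, not `G` or `m₂`, is the instance found for the ambient σ-algebra.
variable {Ω : Type*} {m₁ m₁' m₂ G : MeasurableSpace Ω} {F : ℕ → MeasurableSpace Ω}
  {m : MeasurableSpace Ω} {μ : Measure Ω}

theorem aestronglyMeasurable_iInf_of_antitone (hF : Antitone F)
    {f : Ω → ℝ} (hf : ∀ n, AEStronglyMeasurable[F n] f μ) :
    AEStronglyMeasurable[⨅ n, F n] f μ := by
  choose g hg hfg using hf
  set h : Ω → ℝ := fun ω => limsup (fun n => g n ω) atTop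
  have hmeas : ∀ k, Measurable[F k] h := fun k => by
    have htail : h = fun ω => limsup (fun n => g (n + k) ω) atTop :=
      funext fun ω => (limsup_nat_add _ k).symm
    rw [htail]
    exact Measurable.limsup fun n => (hg (n + k)).measurable.mono (hF (Nat.le_add_left k n)) le_rfl
  refine ⟨h, Measurable.stronglyMeasurable fun t ht =>
    MeasurableSpace.measurableSet_iInf.2 fun k => hmeas k ht, ?_⟩
  filter_upwards [ae_all_iff.2 hfg] with ω hω
  simp [h, ← hω]

theorem lpMeas_mono {E 𝕜 : Type*} [RCLike 𝕜] [NormedAddCommGroup E] [NormedSpace 𝕜 E]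
    {p : ENNReal} (h : m₁ ≤ m₂) :
    lpMeas E 𝕜 m₁ p μ ≤ lpMeas E 𝕜 m₂ p μ := fun _ hf =>
  mem_lpMeas_iff_aestronglyMeasurable.2 ((mem_lpMeas_iff_aestronglyMeasurable.1 hf).mono h)

theorem lpMeas_iInf_of_antitone {p : ENNReal} (hF : Antitone F) :
    lpMeas ℝ ℝ (⨅ n, F n) p μ = ⨅ n, lpMeas ℝ ℝ (F n) p μ :=
  le_antisymm (le_iInf fun n => lpMeas_mono (iInf_le F n)) fun _ hf =>
    mem_lpMeas_iff_aestronglyMeasurable.2 <| aestronglyMeasurable_iInf_of_antitone hF fun n =>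
      mem_lpMeas_iff_aestronglyMeasurable.1 (Submodule.mem_iInf _ |>.1 hf n)

theorem exists_measurableSet_ae_eq_of_indicatorConstLp_mem_lpMeas {p : ENNReal} {A : Set Ω}
    (hA : MeasurableSet A) (hμA : μ A ≠ ⊤)
    (h : indicatorConstLp p hA hμA (1 : ℝ) ∈ lpMeas ℝ ℝ m₁ p μ) :
    ∃ t, MeasurableSet[m₁] t ∧ A =ᵐ[μ] t := by
  obtain ⟨f, hf, hAf⟩ := mem_lpMeas_iff_aestronglyMeasurable.1 h
  refine ⟨f ⁻¹' {1}, hf.measurable (measurableSet_singleton 1), ?_⟩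
  filter_upwards [indicatorConstLp_coeFn.symm.trans hAf] with ω hω
  change (ω ∈ A) = (f ω = 1)
  by_cases hωA : ω ∈ A <;> simp [hωA, ← hω]

theorem isPiSystem_image2_inter (m₁ m₂ : MeasurableSpace Ω) :
    IsPiSystem (image2 (· ∩ ·) {s | MeasurableSet[m₁] s} {t | MeasurableSet[m₂] t}) := by
  rintro _ ⟨B, hB, C, hC, rfl⟩ _ ⟨B', hB', C', hC', rfl⟩ -
  exact ⟨B ∩ B', hB.inter hB', C ∩ C', hC.inter hC', (inter_inter_inter_comm B C B' C').symm⟩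

theorem sup_eq_generateFrom_image2_inter (m₁ m₂ : MeasurableSpace Ω) :
    m₁ ⊔ m₂ = MeasurableSpace.generateFrom
      (image2 (· ∩ ·) {s | MeasurableSet[m₁] s} {t | MeasurableSet[m₂] t}) := by
  refine le_antisymm (sup_le (fun s hs => ?_) fun t ht => ?_) (MeasurableSpace.generateFrom_le ?_)
  · exact MeasurableSpace.measurableSet_generateFrom ⟨s, hs, univ, .univ, inter_univ s⟩
  · exact MeasurableSpace.measurableSet_generateFrom ⟨univ, .univ, t, ht, univ_inter t⟩
  · rintro _ ⟨B, hB, C, hC, rfl⟩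
    exact (le_sup_left (b := m₂) B hB).inter (le_sup_right (a := m₁) C hC)

theorem setIntegral_eq_of_forall_inter {E : Type*} [NormedAddCommGroup E] [NormedSpace ℝ E]
    (hle : m₁ ⊔ m₂ ≤ m) {f g : Ω → E} (hf : Integrable f μ) (hg : Integrable g μ)
    (hfg : ∀ B C, MeasurableSet[m₁] B → MeasurableSet[m₂] C →
      ∫ x in B ∩ C, f x ∂μ = ∫ x in B ∩ C, g x ∂μ)
    {s : Set Ω} (hs : MeasurableSet[m₁ ⊔ m₂] s) : ∫ x in s, f x ∂μ = ∫ x in s, g x ∂μ := by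
  have huniv : ∫ x, f x ∂μ = ∫ x, g x ∂μ := by
    simpa using hfg univ univ .univ .univ
  induction s, hs using MeasurableSpace.induction_on_inter
    (sup_eq_generateFrom_image2_inter m₁ m₂) (isPiSystem_image2_inter m₁ m₂) with
  | empty => simp
  | basic _ h => obtain ⟨B, hB, C, hC, rfl⟩ := h; exact hfg B C hB hC
  | compl t ht iht =>
    rw [setIntegral_compl (hle t ht) hf, setIntegral_compl (hle t ht) hg, iht, huniv]
  | iUnion t hdisj ht iht =>
    rw [integral_iUnion (fun i => hle _ (ht i)) hdisj hf.integrableOn,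
      integral_iUnion (fun i => hle _ (ht i)) hdisj hg.integrableOn]
    simp only [iht]

section Indep

variable [IsFiniteMeasure μ]

theorem setIntegral_inter_eq_mul_of_indep (hm₁ : m₁ ≤ m) (hm₂ : m₂ ≤ m)
    (hind : Indep m₁ m₂ μ) {X : Ω → ℝ} (hX : StronglyMeasurable[m₁] X) (hXi : Integrable X μ)
    {B C : Set Ω} (hB : MeasurableSet[m₁] B) (hC : MeasurableSet[m₂] C) :
    ∫ x in B ∩ C, X x ∂μ = μ.real C * ∫ x in B, X x ∂μ := by
  have hXB : StronglyMeasurable[m₁] (B.indicator X) := hX.indicator hB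
  calc ∫ x in B ∩ C, X x ∂μ = ∫ x in C, B.indicator X x ∂μ := by
        rw [setIntegral_indicator (hm₁ B hB), inter_comm]
    _ = ∫ x in C, (μ[B.indicator X | m₂]) x ∂μ :=
        (setIntegral_condExp hm₂ (hXi.indicator (hm₁ B hB)) hC).symm
    _ = ∫ x in C, (∫ y, B.indicator X y ∂μ) ∂μ :=
        setIntegral_congr_ae (hm₂ C hC) <| (condExp_indep_eq hm₁ hm₂ hXB hind).mono fun _ h _ => h
    _ = μ.real C * ∫ x in B, X x ∂μ := by
        rw [setIntegral_const, integral_indicator (hm₁ B hB), smul_eq_mul]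

theorem condExp_indicator_sup_ae_eq_of_indep (hm₁' : m₁' ≤ m₁) (hm₁ : m₁ ≤ m) (hm₂ : m₂ ≤ m)
    (hind : Indep m₁ m₂ μ) {f : Ω → ℝ} (hf : StronglyMeasurable[m₁] f) (hfi : Integrable f μ)
    {C : Set Ω} (hC : MeasurableSet[m₂] C) :
    μ[C.indicator f | m₁' ⊔ m₂] =ᵐ[μ] C.indicator (μ[f | m₁']) := by
  have hle : m₁' ⊔ m₂ ≤ m := sup_le (hm₁'.trans hm₁) hm₂
  have hCm : MeasurableSet C := hm₂ C hC
  refine (ae_eq_condExp_of_forall_setIntegral_eq hle (hfi.indicator hCm)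
    (fun s _ _ => (integrable_condExp.indicator hCm).integrableOn) (fun s hs _ => ?_)
    ((stronglyMeasurable_condExp.mono le_sup_left).indicator
      (le_sup_right (a := m₁') C hC)).aestronglyMeasurable).symm
  refine setIntegral_eq_of_forall_inter hle (integrable_condExp.indicator hCm)
    (hfi.indicator hCm) (fun B C' hB hC' => ?_) hs
  rw [setIntegral_indicator hCm, setIntegral_indicator hCm, inter_assoc,
    setIntegral_inter_eq_mul_of_indep hm₁ hm₂ hind (stronglyMeasurable_condExp.mono hm₁')
      integrable_condExp (hm₁' B hB) (hC'.inter hC),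
    setIntegral_inter_eq_mul_of_indep hm₁ hm₂ hind hf hfi (hm₁' B hB) (hC'.inter hC),
    setIntegral_condExp (hm₁'.trans hm₁) hfi hB]

end Indep

namespace MeasureTheory.Lp

variable [IsFiniteMeasure μ] {E : Type*} [NormedAddCommGroup E] [NormedSpace ℝ E] {p : ENNReal}
  [Fact (1 ≤ p)] {C : Set Ω}

noncomputable def indicatorCLM (hC : MeasurableSet C) : Lp E p μ →L[ℝ] Lp E p μ :=
  (ContinuousLinearMap.lsmul ℝ ℝ).holderL μ ⊤ p p (indicatorConstLp ⊤ hC (measure_ne_top μ C) 1)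

theorem indicatorCLM_coeFn (hC : MeasurableSet C) (f : Lp E p μ) :
    indicatorCLM hC f =ᵐ[μ] C.indicator f := by
  filter_upwards [ContinuousLinearMap.coeFn_holder (ContinuousLinearMap.lsmul ℝ ℝ)
    (r := p) (indicatorConstLp ⊤ hC (measure_ne_top μ C) (1 : ℝ)) f,
    indicatorConstLp_coeFn (p := ⊤) (hs := hC) (hμs := measure_ne_top μ C) (c := (1 : ℝ))]
    with x h1 h2
  rw [indicatorCLM, ContinuousLinearMap.holderL_apply_apply, h1, h2]
  by_cases hx : x ∈ C <;> simp [hx]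

theorem indicatorCLM_mem_lpMeas (hC : MeasurableSet C) (hC₁ : MeasurableSet[m₁] C)
    {f : Lp E p μ} (hf : f ∈ lpMeas E ℝ m₁ p μ) : indicatorCLM hC f ∈ lpMeas E ℝ m₁ p μ := by
  obtain ⟨g, hg, hfg⟩ := mem_lpMeas_iff_aestronglyMeasurable.1 hf
  refine mem_lpMeas_iff_aestronglyMeasurable.2 ⟨C.indicator g, hg.indicator hC₁, ?_⟩
  filter_upwards [indicatorCLM_coeFn hC f, hfg] with x h1 h2
  rw [h1]
  by_cases hx : x ∈ C <;> simp [hx, h2]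

end MeasureTheory.Lp

theorem condExpL2_indicatorConstLp_inter_of_indep [IsFiniteMeasure μ] (hm₁' : m₁' ≤ m₁)
    (hm₁ : m₁ ≤ m) (hm₂ : m₂ ≤ m) (hind : Indep m₁ m₂ μ) {B C : Set Ω}
    (hB : MeasurableSet[m₁] B) (hC : MeasurableSet[m₂] C) :
    (condExpL2 ℝ ℝ (sup_le (hm₁'.trans hm₁) hm₂)
        (indicatorConstLp 2 ((hm₁ B hB).inter (hm₂ C hC)) (measure_ne_top μ _) (1 : ℝ)) :
        Lp ℝ 2 μ) =
      Lp.indicatorCLM (hm₂ C hC) (condExpL2 ℝ ℝ (hm₁'.trans hm₁)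
        (indicatorConstLp 2 (hm₁ B hB) (measure_ne_top μ B) 1) : Lp ℝ 2 μ) := by
  have hBC : (B ∩ C).indicator (fun _ => (1 : ℝ)) = C.indicator (B.indicator fun _ => 1) := by
    rw [indicator_indicator, inter_comm]
  refine Lp.ext ?_
  filter_upwards [MemLp.condExpL2_ae_eq_condExp (E := ℝ) (𝕜 := ℝ) (sup_le (hm₁'.trans hm₁) hm₂)
      (memLp_indicator_const 2 ((hm₁ B hB).inter (hm₂ C hC)) (1 : ℝ) (Or.inr (measure_ne_top μ _))),
    MemLp.condExpL2_ae_eq_condExp (E := ℝ) (𝕜 := ℝ) (hm₁'.trans hm₁)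
      (memLp_indicator_const 2 (hm₁ B hB) (1 : ℝ) (Or.inr (measure_ne_top μ B))),
    condExp_indicator_sup_ae_eq_of_indep hm₁' hm₁ hm₂ hind
      (stronglyMeasurable_const.indicator hB) ((integrable_const 1).indicator (hm₁ B hB)) hC,
    Lp.indicatorCLM_coeFn (hm₂ C hC) (condExpL2 ℝ ℝ (hm₁'.trans hm₁)
      (indicatorConstLp 2 (hm₁ B hB) (measure_ne_top μ B) 1) : Lp ℝ 2 μ)] with x h1 h2 h3 h4
  calc _ = μ[(B ∩ C).indicator fun _ => (1 : ℝ) | m₁' ⊔ m₂] x := h1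
    _ = C.indicator μ[B.indicator fun _ => (1 : ℝ) | m₁'] x := by rw [hBC, h3]
    _ = _ := by
      rw [h4]
      by_cases hx : x ∈ C
      · simp only [indicator_of_mem hx]; exact h2.symm
      · simp only [indicator_of_notMem hx]

theorem coe_condExpL2_eq_starProjection {E 𝕜 : Type*} [RCLike 𝕜] [NormedAddCommGroup E]
    [InnerProductSpace 𝕜 E] [CompleteSpace E] (hm : m₁ ≤ m)
    [(lpMeas E 𝕜 m₁ 2 μ).HasOrthogonalProjection] (f : Lp E 2 μ) :
    (condExpL2 E 𝕜 hm f : Lp E 2 μ) = (lpMeas E 𝕜 m₁ 2 μ).starProjection f :=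
  rfl

section DecreasingJoin

variable [IsFiniteMeasure μ]

theorem setIntegral_inter_eq_zero_of_mem_orthogonal_lpMeas_iInf_sup (hdec : Antitone F)
    (hFm : ∀ l, F l ≤ m) (hGm : G ≤ m) (hindep : Indep (F 0) G μ) {g : Lp ℝ 2 μ}
    (hg : ∀ l, g ∈ lpMeas ℝ ℝ (F l ⊔ G) 2 μ) (hg_orth : g ∈ (lpMeas ℝ ℝ ((⨅ l, F l) ⊔ G) 2 μ)ᗮ)
    {B C : Set Ω} (hB : MeasurableSet[F 0] B) (hC : MeasurableSet[G] C) :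
    ∫ x in B ∩ C, g x ∂μ = 0 := by
  have : ∀ l, Fact (F l ≤ m) := fun l => ⟨hFm l⟩
  have : ∀ l, Fact (F l ⊔ G ≤ m) := fun l => ⟨sup_le (hFm l) hGm⟩
  have : Fact ((⨅ l, F l) ≤ m) := ⟨(iInf_le F 0).trans (hFm 0)⟩
  have : (⨅ l, lpMeas ℝ ℝ (F l) 2 μ).HasOrthogonalProjection := by
    rw [← lpMeas_iInf_of_antitone hdec]; infer_instance
  set xB := indicatorConstLp 2 (hFm 0 B hB) (measure_ne_top μ B) (1 : ℝ)
  set T := Lp.indicatorCLM (μ := μ) (E := ℝ) (p := 2) (hGm C hC)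
  set e : ℕ → Lp ℝ 2 μ := fun l => (lpMeas ℝ ℝ (F l) 2 μ).starProjection xB
  set e' := (⨅ l, lpMeas ℝ ℝ (F l) 2 μ).starProjection xB
  have hproj : ∀ l, ∫ x in B ∩ C, g x ∂μ = inner ℝ (T (e l)) g := fun l => by
    set P := (lpMeas ℝ ℝ (F l ⊔ G) 2 μ).starProjection
    calc ∫ x in B ∩ C, g x ∂μ
        = inner ℝ (indicatorConstLp 2 ((hFm 0 B hB).inter (hGm C hC)) (measure_ne_top μ _) 1) g :=
          (L2.inner_indicatorConstLp_one _ _ g).symm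
      _ = inner ℝ (P (indicatorConstLp 2 ((hFm 0 B hB).inter (hGm C hC))
            (measure_ne_top μ _) 1)) g := by
          rw [Submodule.inner_starProjection_left_eq_right,
            Submodule.starProjection_eq_self_iff.2 (hg l)]
      _ = inner ℝ (T (e l)) g := by
          rw [← coe_condExpL2_eq_starProjection (sup_le (hFm l) hGm),
            condExpL2_indicatorConstLp_inter_of_indep (hdec (Nat.zero_le l)) (hFm 0) hGm hindep
              hB hC]
          rfl
  have hlim : inner ℝ (T e') g = 0 := by
    refine Submodule.inner_right_of_mem_orthogonal ?_ hg_orth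
    refine Lp.indicatorCLM_mem_lpMeas _ (le_sup_right (a := ⨅ l, F l) C hC)
      (lpMeas_mono le_sup_left ?_)
    rw [lpMeas_iInf_of_antitone hdec]
    exact Submodule.starProjection_apply_mem _ xB
  have he : Tendsto e atTop (𝓝 e') :=
    Submodule.starProjection_tendsto_iInf (fun l => lpMeas ℝ ℝ (F l) 2 μ)
      (fun _ _ hkl => lpMeas_mono (hdec hkl)) xB
  have hT : Tendsto (fun l => inner ℝ (T (e l)) g) atTop (𝓝 (inner ℝ (T e') g)) :=
    ((T.continuous.tendsto e').comp he).inner tendsto_const_nhds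
  rw [← funext hproj, hlim] at hT
  exact tendsto_nhds_unique tendsto_const_nhds hT

theorem iInf_lpMeas_sup_le_lpMeas_iInf_sup (hdec : Antitone F) (hFm : ∀ l, F l ≤ m) (hGm : G ≤ m)
    (hindep : Indep (F 0) G μ) :
    ⨅ l, lpMeas ℝ ℝ (F l ⊔ G) 2 μ ≤ lpMeas ℝ ℝ ((⨅ l, F l) ⊔ G) 2 μ := by
  have : Fact ((⨅ l, F l) ⊔ G ≤ m) := ⟨sup_le ((iInf_le F 0).trans (hFm 0)) hGm⟩
  intro f hf
  set K := lpMeas ℝ ℝ ((⨅ l, F l) ⊔ G) 2 μ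
  set g := f - K.starProjection f
  have hg : ∀ l, g ∈ lpMeas ℝ ℝ (F l ⊔ G) 2 μ := fun l =>
    sub_mem (Submodule.mem_iInf _ |>.1 hf l)
      (lpMeas_mono (sup_le_sup_right (iInf_le F l) G) (K.starProjection_apply_mem f))
  have hgi : Integrable g μ := (Lp.memLp g).integrable one_le_two
  have hg_int : ∀ s, MeasurableSet[F 0 ⊔ G] s → ∫ x in s, g x ∂μ = 0 := fun s hs => by
    simpa using setIntegral_eq_of_forall_inter (sup_le (hFm 0) hGm) hgi (integrable_zero Ω ℝ μ)
      (fun B C hB hC => by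
        simpa using setIntegral_inter_eq_zero_of_mem_orthogonal_lpMeas_iInf_sup hdec hFm hGm
          hindep hg (K.sub_starProjection_mem_orthogonal f) hB hC) hs
  have hg0 : g = 0 := (Lp.eq_zero_iff_ae_eq_zero).2 <|
    lpMeas.ae_eq_zero_of_forall_setIntegral_eq_zero (sup_le (hFm 0) hGm) ⟨g, hg 0⟩ two_ne_zero
      ENNReal.ofNat_ne_top (fun _ _ _ => hgi.integrableOn) fun s hs _ => hg_int s hs
  rw [sub_eq_zero] at hg0
  exact hg0 ▸ K.starProjection_apply_mem f

theorem exists_measurableSet_ae_eq_of_measurableSet_iInf_sup (hdec : Antitone F)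
    (hFm : ∀ l, F l ≤ m) (hGm : G ≤ m) (hindep : Indep (F 0) G μ) {A : Set Ω}
    (hA : MeasurableSet[⨅ l, F l ⊔ G] A) :
    ∃ t, MeasurableSet[(⨅ l, F l) ⊔ G] t ∧ A =ᵐ[μ] t := by
  have hAl : ∀ l, MeasurableSet[F l ⊔ G] A := fun l => iInf_le (fun l => F l ⊔ G) l A hA
  have hAm : MeasurableSet A := sup_le (hFm 0) hGm A (hAl 0)
  have hmem : indicatorConstLp 2 hAm (measure_ne_top μ A) (1 : ℝ) ∈
      ⨅ l, lpMeas ℝ ℝ (F l ⊔ G) 2 μ :=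
    Submodule.mem_iInf _ |>.2 fun l => mem_lpMeas_indicatorConstLp (sup_le (hFm l) hGm) (hAl l) _
  exact exists_measurableSet_ae_eq_of_indicatorConstLp_mem_lpMeas hAm _
    (iInf_lpMeas_sup_le_lpMeas_iInf_sup hdec hFm hGm hindep hmem)

end DecreasingJoin

end

/-- `F l` stands for the paper's `F_{-l}`. -/
theorem iInf_join_eq_join_iInf_of_indep
    {Ω : Type*} {m : MeasurableSpace Ω} {μ : Measure Ω} [IsProbabilityMeasure μ]
    (F : ℕ → MeasurableSpace Ω) (hdec : Antitone F) (hFm : ∀ l, F l ≤ m)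
    (G : MeasurableSpace Ω) (hGm : G ≤ m)
    (hindep : Indep (F 0) G μ) :
    EqModNull μ (⨅ l, (F l ⊔ G)) ((⨅ l, F l) ⊔ G) := by
  refine ⟨fun A hA => ?_, fun s hs =>
    ⟨s, le_iInf (fun l => sup_le_sup_right (iInf_le F l) G) s hs, by simp⟩⟩
  obtain ⟨t, ht, hAt⟩ := exists_measurableSet_ae_eq_of_measurableSet_iInf_sup hdec hFm hGm hindep hA
  exact ⟨t, ht, measure_symmDiff_eq_zero_iff.2 hAt⟩
end

section
/- Let G be a compact metrizable topological group and H, K compact subgroups. If g_n H → gH in G/H and g_n K → gK in G/K, then g_n (H ∩ K) → g(H ∩ K) in G/(H ∩ K). -/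
/-!
The map `G ⧸ (H ⊓ K) → G ⧸ H × G ⧸ K` is a continuous injection from a compact space into a
Hausdorff one (compact subgroups of a Hausdorff group are closed), hence an embedding, so
convergence in `G ⧸ (H ⊓ K)` can be read off from the two factors.
-/

open Filter Topology

theorem Subgroup.continuous_quotientMapOfLE {G : Type*} [Group G] [TopologicalSpace G]
    {H K : Subgroup G} (h : H ≤ K) : Continuous (quotientMapOfLE h) :=
  continuous_id.quotient_map' _

theorem Subgroup.isClosedEmbedding_quotientMapOfLE_inf {G : Type*} [Group G] [TopologicalSpace G]
    [IsTopologicalGroup G] [CompactSpace G] (H K : Subgroup G) [IsClosed (H : Set G)]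
    [IsClosed (K : Set G)] :
    IsClosedEmbedding fun q : G ⧸ (H ⊓ K) =>
      (quotientMapOfLE inf_le_left q, quotientMapOfLE inf_le_right q) := by
  refine ((continuous_quotientMapOfLE _).prodMk
    (continuous_quotientMapOfLE _)).isClosedEmbedding ?_
  refine Quotient.ind₂' fun x y hxy => ?_
  simp only [Prod.mk.injEq] at hxy
  exact QuotientGroup.eq.2 ⟨QuotientGroup.eq.1 hxy.1, QuotientGroup.eq.1 hxy.2⟩

/-- If `gₙH → gH` in `G/H` and `gₙK → gK` in `G/K`, then
`gₙ(H ∩ K) → g(H ∩ K)` in `G/(H ∩ K)`, for compact subgroups `H`, `K`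
of a compact metrizable group `G`. -/
theorem tendsto_quotient_mk_inf
    {G : Type*} [Group G] [TopologicalSpace G] [IsTopologicalGroup G]
    [CompactSpace G] [TopologicalSpace.MetrizableSpace G]
    (H K : Subgroup G)
    (hHc : IsCompact (H : Set G)) (hKc : IsCompact (K : Set G))
    (g : ℕ → G) (g₀ : G)
    (hH : Tendsto (fun n => (QuotientGroup.mk (g n) : G ⧸ H)) atTop
      (nhds (QuotientGroup.mk g₀ : G ⧸ H)))
    (hK : Tendsto (fun n => (QuotientGroup.mk (g n) : G ⧸ K)) atTop
      (nhds (QuotientGroup.mk g₀ : G ⧸ K))) :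
    Tendsto (fun n => (QuotientGroup.mk (g n) : G ⧸ (H ⊓ K))) atTop
      (nhds (QuotientGroup.mk g₀ : G ⧸ (H ⊓ K))) := by
  have : IsClosed (H : Set G) := hHc.isClosed
  have : IsClosed (K : Set G) := hKc.isClosed
  exact (Subgroup.isClosedEmbedding_quotientMapOfLE_inf H K).isEmbedding.tendsto_nhds_iff.2
    (hH.prodMk_nhds hK)
end

section
/- Let G be a compact group, (ξ_k)_{k ∈ -ℕ} independent G-valued random variables with ξ_k ~ μ_k, and let η_k* be, for each k, a G-valued random variable uniform on G (law equal to normalized Haar measure) independent of (ξ_m)_{m ≤ k}, with η_k* = ξ_k η_{k-1}*. Then each η_k* is independent of the entire noise process (ξ_m)_{m ∈ -ℕ}. -/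
open MeasureTheory ProbabilityTheory

/-- The σ-field generated by the variables `f m` for `m ≥ k`; since the index `m : ℕ`
encodes the time `-m ∈ -ℕ`, this is the past `σ(f_t : t ≤ -k)`. -/
def pastSigma {G Ω : Type*} [MeasurableSpace G] (f : ℕ → Ω → G) (k : ℕ) :
    MeasurableSpace Ω :=
  ⨆ m, ⨆ _ : k ≤ m, MeasurableSpace.comap (f m) inferInstance

/-!
Iterating the recursion gives `η₀ = (ξ₀ ⋯ ξ_{k-1}) η_k` a.s., and `η₀` is independent of the whole
noise σ-field `F`, which is the past at time `0`. Conditionally on `F` the product `ξ₀ ⋯ ξ_{k-1}` is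
frozen while `η₀` is Haar distributed, so by left invariance `η_k` is again Haar distributed and
independent of `F`.

To make this rigorous without second countability of `G` (the product of the `ξ_i` need not be
measurable then), the product is approximated uniformly by finitely valued `F`-measurable maps. On
each piece of such a partition `η_k ∈ K` forces `η₀` into a translate of a slightly larger open
`U ⊇ K`, which yields `P(η_k ∈ K, S) ≤ ω(U) P(S)` for `S ∈ F`; outer regularity of `ω` and the
same bound for `Sᶜ` turn this into equality on closed sets.
-/

open Pointwise Topology Function

section Approximation

variable {Ω G : Type*} [Group G] [TopologicalSpace G]

/-- Unlike `m`-measurability, this is stable under products even when `G` is not second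
countable. -/
def UnifApproxBySimple (m : MeasurableSpace Ω) (Y : Ω → G) : Prop :=
  ∀ V ∈ 𝓝 (1 : G), ∃ (ι : Type) (_ : Finite ι) (c : ι → G) (T : ι → Set Ω),
    (∀ i, MeasurableSet[m] (T i)) ∧ Pairwise (Disjoint on T) ∧ ⋃ i, T i = Set.univ ∧
      ∀ i, ∀ x ∈ T i, (c i)⁻¹ * Y x ∈ V

variable [IsTopologicalGroup G] {m : MeasurableSpace Ω}

theorem UnifApproxBySimple.of_measurable [CompactSpace G] [MeasurableSpace G]
    [OpensMeasurableSpace G] {Y : Ω → G} (hY : Measurable[m] Y) : UnifApproxBySimple m Y := by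
  intro V hV
  obtain ⟨V₀, hV₀V, hV₀o, hV₀1⟩ := mem_nhds_iff.1 hV
  obtain ⟨t, ht⟩ := compact_covered_by_mul_left_translates isCompact_univ
    (hV₀o.interior_eq.symm ▸ ⟨1, hV₀1⟩ : (interior V₀).Nonempty)
  let g : Fin t.card → G := fun i => t.equivFin.symm i
  let u : Fin t.card → Set G := fun i => (g i * ·) ⁻¹' V₀
  have hu : ⋃ i, u i = Set.univ := by
    refine Set.eq_univ_of_forall fun y => ?_
    obtain ⟨a, ha, hya⟩ := Set.mem_iUnion₂.1 (ht (Set.mem_univ y))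
    exact Set.mem_iUnion.2 ⟨t.equivFin ⟨a, ha⟩, by simpa [u, g] using hya⟩
  have hum : ∀ i, MeasurableSet (u i) := fun i =>
    (hV₀o.preimage (continuous_const_mul (g i))).measurableSet
  refine ⟨Fin t.card, inferInstance, fun i => (g i)⁻¹, fun i => Y ⁻¹' disjointed u i,
    fun i => hY (disjointedRec (fun _ j hs => hs.diff (hum j)) (hum i)),
    fun i j hij => (disjoint_disjointed u hij).preimage Y, ?_, fun i x hx => ?_⟩
  · rw [← Set.preimage_iUnion, iUnion_disjointed, hu, Set.preimage_univ]
  · simpa using hV₀V (disjointed_subset u i hx)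

theorem UnifApproxBySimple.mul {Y Z : Ω → G} (hY : UnifApproxBySimple m Y)
    (hZ : UnifApproxBySimple m Z) : UnifApproxBySimple m (Y * Z) := by
  intro V hV
  obtain ⟨V₁, hV₁o, hV₁1, hV₁V⟩ := exists_open_nhds_one_mul_subset hV
  obtain ⟨ι', hι', d, T', hT'm, hT'd, hT'u, hZd⟩ := hZ V₁ (hV₁o.mem_nhds hV₁1)
  -- `(c d)⁻¹ (Y Z) = d⁻¹ (c⁻¹ Y) d * d⁻¹ Z`, and there are only finitely many `d` to conjugate by
  have hconj : ⋂ j, (fun h => (d j)⁻¹ * h * d j) ⁻¹' V₁ ∈ 𝓝 (1 : G) :=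
    Filter.iInter_mem.2 fun j =>
      (hV₁o.preimage (by fun_prop)).mem_nhds (by simpa using hV₁1)
  obtain ⟨ι, hι, c, T, hTm, hTd, hTu, hYc⟩ := hY _ hconj
  refine ⟨ι × ι', inferInstance, fun p => c p.1 * d p.2, fun p => T p.1 ∩ T' p.2,
    fun p => (hTm p.1).inter (hT'm p.2), fun p q hpq => ?_, ?_, fun p x hx => ?_⟩
  · obtain h | h : p.1 ≠ q.1 ∨ p.2 ≠ q.2 := by
      by_contra! h; exact hpq (Prod.ext h.1 h.2)
    · exact (hTd h).mono Set.inter_subset_left Set.inter_subset_left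
    · exact (hT'd h).mono Set.inter_subset_right Set.inter_subset_right
  · refine Set.eq_univ_of_forall fun x => ?_
    obtain ⟨i, hi⟩ := Set.mem_iUnion.1 (hTu ▸ Set.mem_univ x)
    obtain ⟨j, hj⟩ := Set.mem_iUnion.1 (hT'u ▸ Set.mem_univ x)
    exact Set.mem_iUnion.2 ⟨(i, j), hi, hj⟩
  · have hfactor : (c p.1 * d p.2)⁻¹ * (Y * Z) x
        = ((d p.2)⁻¹ * ((c p.1)⁻¹ * Y x) * d p.2) * ((d p.2)⁻¹ * Z x) := by
      simp only [Pi.mul_apply]; group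
    rw [hfactor]
    exact hV₁V (Set.mul_mem_mul (Set.mem_iInter.1 (hYc _ x hx.1) p.2) (hZd _ x hx.2))

theorem unifApproxBySimple_prod_range [CompactSpace G] [MeasurableSpace G]
    [OpensMeasurableSpace G] {ξ : ℕ → Ω → G} (hξ : ∀ i, Measurable[m] (ξ i)) (n : ℕ) :
    UnifApproxBySimple m fun x => ((List.range n).map (ξ · x)).prod := by
  induction n with
  | zero =>
    simpa using UnifApproxBySimple.of_measurable (m := m) (Y := fun _ => (1 : G)) measurable_const
  | succ n ih =>
    simp only [List.prod_range_succ]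
    exact ih.mul (UnifApproxBySimple.of_measurable (hξ n))

end Approximation

theorem ae_eq_prod_range_mul {Ω G : Type*} [Monoid G] [MeasurableSpace Ω] {P : Measure Ω}
    {η ξ : ℕ → Ω → G} (heq : ∀ k, η k =ᵐ[P] fun x => ξ k x * η (k + 1) x) (n : ℕ) :
    η 0 =ᵐ[P] fun x => ((List.range n).map (ξ · x)).prod * η n x := by
  induction n with
  | zero => simp
  | succ n ih =>
    filter_upwards [ih, heq n] with x h₀ hn
    rw [h₀, hn, List.prod_range_succ, mul_assoc]

theorem le_measure_mul_of_forall_isOpen {α : Type*} [TopologicalSpace α] [MeasurableSpace α]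
    {μ : Measure α} [μ.OuterRegular] {s : Set α} {a b : ENNReal} (hb : b ≠ ⊤)
    (h : ∀ U, s ⊆ U → IsOpen U → a ≤ μ U * b) : a ≤ μ s * b := by
  rcases eq_or_ne b 0 with rfl | hb₀
  · simpa using h Set.univ (Set.subset_univ s) isOpen_univ
  rw [Set.measure_eq_iInf_isOpen]
  simp only [ENNReal.iInf_mul_of_ne hb₀ hb, le_iInf_iff]
  exact h

theorem measure_preimage_inter_le_of_ae_eq_mul {Ω G : Type*} [Group G] [TopologicalSpace G]
    [IsTopologicalGroup G] [MeasurableSpace G] [OpensMeasurableSpace G]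
    {ω : Measure G} [ω.IsMulLeftInvariant] [ω.OuterRegular]
    {m : MeasurableSpace Ω} [mΩ : MeasurableSpace Ω] (hm : m ≤ mΩ) {P : Measure Ω}
    [IsFiniteMeasure P] {X Y Z : Ω → G} (hX : Measurable X)
    (hXind : Indep (MeasurableSpace.comap X inferInstance) m P) (hXlaw : P.map X = ω)
    (hY : UnifApproxBySimple m Y) (hXYZ : X =ᵐ[P] Y * Z)
    {K : Set G} (hK : IsCompact K) {S : Set Ω} (hS : MeasurableSet[m] S) :
    P (Z ⁻¹' K ∩ S) ≤ ω K * P S := by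
  have hXS : ∀ A, MeasurableSet A → ∀ S', MeasurableSet[m] S' →
      P (X ⁻¹' A ∩ S') = ω A * P S' := fun A hA S' hS' => by
    rw [(Indep_iff _ _ _).1 hXind _ _ ⟨A, hA, rfl⟩ hS', ← hXlaw, Measure.map_apply hX hA]
  refine le_measure_mul_of_forall_isOpen (measure_ne_top P S) fun U hKU hU => ?_
  obtain ⟨V, hV, hVK⟩ := compact_open_separated_mul_left hK hU hKU
  obtain ⟨ι, hι, c, T, hTm, hTd, hTu, hYc⟩ := hY V hV
  calc P (Z ⁻¹' K ∩ S) ≤ P (⋃ i, X ⁻¹' (c i • U) ∩ (S ∩ T i)) := by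
        refine measure_mono_ae ?_
        filter_upwards [hXYZ] with x hx ⟨hxK, hxS⟩
        obtain ⟨i, hi⟩ := Set.mem_iUnion.1 (hTu ▸ Set.mem_univ x)
        refine Set.mem_iUnion.2 ⟨i, ?_, hxS, hi⟩
        rw [Set.mem_preimage, Set.mem_smul_set_iff_inv_smul_mem, hx, smul_eq_mul, Pi.mul_apply,
          ← mul_assoc]
        exact hVK (Set.mul_mem_mul (hYc i x hi) hxK)
    _ ≤ ∑' i, P (X ⁻¹' (c i • U) ∩ (S ∩ T i)) := measure_iUnion_le _
    _ = ∑' i, ω U * P (S ∩ T i) := tsum_congr fun i => by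
        rw [hXS _ (hU.smul _).measurableSet _ (hS.inter (hTm i)), measure_smul]
    _ = ω U * P S := by
        rw [ENNReal.tsum_mul_left, ← measure_iUnion
          (fun i j hij => (hTd hij).mono Set.inter_subset_right Set.inter_subset_right)
          (fun i => hm _ (hS.inter (hTm i))), ← Set.inter_iUnion, hTu, Set.inter_univ]

section Independence

variable {Ω : Type*} {m : MeasurableSpace Ω} [mΩ : MeasurableSpace Ω] {P : Measure Ω}
  [IsProbabilityMeasure P]

theorem measure_inter_eq_mul_of_forall_le (hm : m ≤ mΩ) {t : Set Ω}
    (h : ∀ S, MeasurableSet[m] S → P (t ∩ S) ≤ P t * P S) {S : Set Ω}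
    (hS : MeasurableSet[m] S) : P (t ∩ S) = P t * P S := by
  refine le_antisymm (h S hS) (ENNReal.le_of_add_le_add_right (measure_ne_top P (t ∩ Sᶜ)) ?_)
  calc P t * P S + P (t ∩ Sᶜ) ≤ P t * P S + P t * P Sᶜ := by gcongr; exact h _ hS.compl
    _ = P t := by rw [← mul_add, prob_add_prob_compl (hm _ hS), mul_one]
    _ = P (t ∩ S) + P (t ∩ Sᶜ) := by rw [← Set.sdiff_eq, measure_inter_add_sdiff _ (hm _ hS)]

theorem indep_comap_of_forall_isClosed {G : Type*} [TopologicalSpace G] [MeasurableSpace G]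
    [BorelSpace G] (hm : m ≤ mΩ) {Z : Ω → G} (hZ : Measurable Z)
    (h : ∀ K, IsClosed K → ∀ S, MeasurableSet[m] S → P (Z ⁻¹' K ∩ S) ≤ P (Z ⁻¹' K) * P S) :
    Indep (MeasurableSpace.comap Z inferInstance) m P := by
  refine IndepSets.indep hZ.comap_le hm (isPiSystem_isClosed.comap Z)
    (@MeasurableSpace.isPiSystem_measurableSet Ω m) ?_
    (@MeasurableSpace.generateFrom_measurableSet Ω m).symm ((IndepSets_iff _ _ _).2 ?_)
  · rw [BorelSpace.measurable_eq (α := G), borel_eq_generateFrom_isClosed,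
      MeasurableSpace.comap_generateFrom]
    rfl
  · rintro _ S ⟨K, hK, rfl⟩ hS
    exact measure_inter_eq_mul_of_forall_le hm (h K hK) hS

end Independence

theorem uniform_solution_indep_of_noise_general
    {G : Type*} [Group G] [TopologicalSpace G] [IsTopologicalGroup G]
    [CompactSpace G] [MeasurableSpace G] [BorelSpace G]
    (ω : Measure G) [ω.IsHaarMeasure]
    {Ω : Type*} [MeasurableSpace Ω] (P : Measure Ω) [IsProbabilityMeasure P]
    (η ξ : ℕ → Ω → G)
    (hηm : ∀ k, Measurable (η k)) (hξm : ∀ k, Measurable (ξ k))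
    (hηlaw : ∀ k, P.map (η k) = ω)
    (hηξ : ∀ k, Indep (MeasurableSpace.comap (η k) inferInstance) (pastSigma ξ k) P)
    (heq : ∀ k, η k =ᵐ[P] fun x => ξ k x * η (k + 1) x) :
    ∀ k, Indep (MeasurableSpace.comap (η k) inferInstance)
      (⨆ m, MeasurableSpace.comap (ξ m) inferInstance) P := by
  intro k
  have hF : (⨆ m, MeasurableSpace.comap (ξ m) inferInstance) ≤ ‹MeasurableSpace Ω› :=
    iSup_le fun m => (hξm m).comap_le
  have hη₀ : Indep (MeasurableSpace.comap (η 0) inferInstance)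
      (⨆ m, MeasurableSpace.comap (ξ m) inferInstance) P := by
    simpa [pastSigma] using hηξ 0
  have hprod : UnifApproxBySimple (⨆ m, MeasurableSpace.comap (ξ m) inferInstance)
      fun x => ((List.range k).map (ξ · x)).prod :=
    unifApproxBySimple_prod_range (fun i => (comap_measurable (ξ i)).mono
      (le_iSup (fun m => MeasurableSpace.comap (ξ m) inferInstance) i) le_rfl) k
  refine indep_comap_of_forall_isClosed hF (hηm k) fun K hK S hS => ?_
  rw [← Measure.map_apply (hηm k) hK.measurableSet, hηlaw k]
  exact measure_preimage_inter_le_of_ae_eq_mul hF (hηm 0) hη₀ (hηlaw 0) hprod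
    (ae_eq_prod_range_mul heq k) hK.isCompact hS

/-- If `(ξ_k)` are independent with laws `μ_k`, each `η_k` is uniform on the compact
group `G` (law = normalized Haar measure `ω`), independent of the past noise
`σ(ξ_m : m ≤ k)`, and `η_k = ξ_k η_{k-1}` a.s., then each `η_k` is independent of the
whole noise process `(ξ_m)_{m ∈ -ℕ}`.  (Index `k : ℕ` encodes time `-k`.) -/
theorem uniform_solution_indep_of_noise
    {G : Type*} [Group G] [TopologicalSpace G] [IsTopologicalGroup G]
    [CompactSpace G] [T2Space G] [MeasurableSpace G] [BorelSpace G]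
    (ω : Measure G) [ω.IsHaarMeasure] [IsProbabilityMeasure ω]
    {Ω : Type*} [MeasurableSpace Ω] (P : Measure Ω) [IsProbabilityMeasure P]
    (η ξ : ℕ → Ω → G) (μk : ℕ → Measure G)
    (hηm : ∀ k, Measurable (η k)) (hξm : ∀ k, Measurable (ξ k))
    (hξindep : iIndepFun ξ P)
    (hξlaw : ∀ k, P.map (ξ k) = μk k)
    (hηlaw : ∀ k, P.map (η k) = ω)
    (hηξ : ∀ k, Indep (MeasurableSpace.comap (η k) inferInstance) (pastSigma ξ k) P)
    (heq : ∀ k, η k =ᵐ[P] fun x => ξ k x * η (k + 1) x) :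
    ∀ k, Indep (MeasurableSpace.comap (η k) inferInstance)
      (⨆ m, MeasurableSpace.comap (ξ m) inferInstance) P :=
  uniform_solution_indep_of_noise_general ω P η ξ hηm hξm hηlaw hηξ heq
end

section
/- Let {(η_k),(ξ_k)} be a solution of η_k = ξ_k η_{k-1} on a compact group G such that the tail σ-field F^η_{-∞} := ⋂_k σ(η_m : m ≤ k) is not trivial. Then the law of (η_k) is not an extremal point of the convex set P_μ of laws of solutions: it can be written as a nontrivial convex combination c P₁ + (1−c) P₂ with P₁, P₂ ∈ P_μ, P₁ ≠ P₂, 0 < c < 1. -/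
open MeasureTheory ProbabilityTheory
open scoped ENNReal

/-- A solution of the stochastic equation `η_k = ξ_k η_{k-1}` (`k ∈ -ℕ`) with noise law
`μ = (μ_k)`: both processes are measurable, the equation holds a.s., each `ξ_k` is
independent of the past `σ(η_m : m ≤ k-1)`, and `ξ_k` has law `μ_k`.
The index `k : ℕ` encodes the time `-k`, so time `k - 1` is encoded by `k + 1`. -/
def IsSolution {G Ω : Type*} [Group G] [MeasurableSpace G] [MeasurableSpace Ω]
    (P : Measure Ω) (μk : ℕ → Measure G) (η ξ : ℕ → Ω → G) : Prop :=
  (∀ k, Measurable (η k)) ∧ (∀ k, Measurable (ξ k)) ∧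
  (∀ k, η k =ᵐ[P] fun x => ξ k x * η (k + 1) x) ∧
  (∀ k, Indep (MeasurableSpace.comap (ξ k) inferInstance) (pastSigma η (k + 1)) P) ∧
  (∀ k, P.map (ξ k) = μk k)

/-- The set `P_μ` of laws on `G^{-ℕ}` of processes `(η_k)` arising from solutions of
`η_k = ξ_k η_{k-1}` with noise law `μ = (μ_k)`. -/
def solutionLaws {G : Type*} [Group G] [MeasurableSpace G] (μk : ℕ → Measure G) :
    Set (Measure (ℕ → G)) :=
  { Q | ∃ (Ω : Type) (_ : MeasurableSpace Ω) (P : Measure Ω) (η ξ : ℕ → Ω → G),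
      IsProbabilityMeasure P ∧ IsSolution P μk η ξ ∧
      Q = P.map (fun x (k : ℕ) => η k x) }

/-!
Let `s` be a tail event with `0 < P s < 1`. Since `s` lies in every past σ-field and each `ξ_k`
is independent of the past, conditioning on `s` (or on `sᶜ`) preserves both the equation and the
independence and law of the noise, so the conditional laws of `η` are again laws of solutions.
The law of `η` is their convex combination with weights `P s` and `P sᶜ`, and they differ because
`s` is determined by the path of `η`, to which they give masses `1` and `0`.
-/

theorem PolishSpace.of_compactSpace (X : Type*) [TopologicalSpace X] [CompactSpace X]
    [T2Space X] [SecondCountableTopology X] : PolishSpace X := by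
  let := TopologicalSpace.metrizableSpaceMetric X
  infer_instance

theorem exists_measurable_factor_through_real {Ω α : Type*} [MeasurableSpace Ω]
    [MeasurableSpace α] [StandardBorelSpace α] [Nonempty α] {X : ℕ → Ω → α}
    (hX : ∀ k, Measurable (X k)) :
    ∃ φ : Ω → ℝ, Measurable φ ∧
      ∃ X' : ℕ → ℝ → α, (∀ k, Measurable (X' k)) ∧ ∀ k, X' k ∘ φ = X k := by
  obtain ⟨e, he⟩ := exists_measurableEmbedding_real (ℕ → α)
  choose X' hX' hX'e using fun k =>
    he.exists_measurable_extend (measurable_pi_apply k) fun _ => inferInstanceAs (Nonempty α)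
  refine ⟨e ∘ fun x k => X k x, he.measurable.comp (measurable_pi_lambda _ hX), X', hX',
    fun k => ?_⟩
  rw [← Function.comp_assoc, hX'e k]
  rfl

section Conditioning

variable {Ω : Type*} {mΩ : MeasurableSpace Ω} {μ : Measure Ω} {s t : Set Ω}

theorem measure_smul_cond_add_measure_smul_cond_compl [IsFiniteMeasure μ]
    (hs : MeasurableSet s) : μ s • μ[|s] + μ sᶜ • μ[|sᶜ] = μ := by
  ext t
  simp only [Measure.add_apply, Measure.smul_apply, smul_eq_mul, mul_comm (μ _)]
  exact cond_add_cond_compl_eq hs μ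

theorem map_cond_ne_map_cond_compl [IsFiniteMeasure μ] {α : Type*} [MeasurableSpace α]
    {f : Ω → α} (hf : Measurable f) (hs : MeasurableSet[MeasurableSpace.comap f ‹_›] s)
    (hμs : μ s ≠ 0) : μ[|s].map f ≠ μ[|sᶜ].map f := by
  obtain ⟨B, hB, rfl⟩ := hs
  intro h
  have h_eval := congrArg (fun ν : Measure α => ν B) h
  simp only [Measure.map_apply hf hB, cond_apply_self hμs (measure_ne_top μ _),
    cond_apply (hf hB).compl, Set.compl_inter_self, measure_empty, mul_zero] at h_eval
  exact one_ne_zero h_eval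

theorem ProbabilityTheory.Indep.cond_apply_eq {m₁ m₂ : MeasurableSpace Ω} [IsFiniteMeasure μ]
    (h : Indep m₁ m₂ μ) (hm₂ : m₂ ≤ mΩ) (ht : MeasurableSet[m₁] t) (hs : MeasurableSet[m₂] s)
    (hμs : μ s ≠ 0) : μ[t|s] = μ t := by
  rw [cond_apply (hm₂ s hs), Set.inter_comm, (Indep_iff _ _ μ).1 h t s ht hs, mul_comm,
    mul_assoc, ENNReal.mul_inv_cancel hμs (measure_ne_top μ s), mul_one]

theorem ProbabilityTheory.Indep.cond_of_measurableSet_right {m₁ m₂ : MeasurableSpace Ω} [IsFiniteMeasure μ]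
    (h : Indep m₁ m₂ μ) (hm₂ : m₂ ≤ mΩ) (hs : MeasurableSet[m₂] s) (hμs : μ s ≠ 0) :
    Indep m₁ m₂ μ[|s] := by
  rw [Indep_iff]
  intro t₁ t₂ ht₁ ht₂
  rw [h.cond_apply_eq hm₂ ht₁ hs hμs, cond_apply (hm₂ s hs), cond_apply (hm₂ s hs),
    show s ∩ (t₁ ∩ t₂) = t₁ ∩ (s ∩ t₂) by ac_rfl, (Indep_iff _ _ μ).1 h _ _ ht₁ (hs.inter ht₂)]
  ring

theorem indep_map_of_indep_comap {Ω' : Type*} {m₁ m₂ mΩ' : MeasurableSpace Ω'} {φ : Ω → Ω'}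
    (hφ : Measurable φ) (hm₁ : m₁ ≤ mΩ') (hm₂ : m₂ ≤ mΩ')
    (h : Indep (m₁.comap φ) (m₂.comap φ) μ) : Indep m₁ m₂ (μ.map φ) := by
  rw [Indep_iff]
  intro t₁ t₂ ht₁ ht₂
  rw [Measure.map_apply hφ ((hm₁ t₁ ht₁).inter (hm₂ t₂ ht₂)), Measure.map_apply hφ (hm₁ t₁ ht₁),
    Measure.map_apply hφ (hm₂ t₂ ht₂), Set.preimage_inter]
  exact (Indep_iff _ _ μ).1 h _ _ ⟨t₁, ht₁, rfl⟩ ⟨t₂, ht₂, rfl⟩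

end Conditioning

section PastSigma

variable {G : Type*} [MeasurableSpace G]

theorem pastSigma_le {Ω : Type*} [MeasurableSpace Ω] {η : ℕ → Ω → G} (hη : ∀ k, Measurable (η k)) (k : ℕ) :
    pastSigma η k ≤ ‹MeasurableSpace Ω› :=
  iSup₂_le fun m _ => (hη m).comap_le

theorem pastSigma_le_comap_pi {Ω : Type*} (η : ℕ → Ω → G) (k : ℕ) :
    pastSigma η k ≤ MeasurableSpace.comap (fun x m => η m x) MeasurableSpace.pi :=
  iSup₂_le fun m _ =>
    ((measurable_pi_apply m).comp (comap_measurable fun x (m : ℕ) => η m x)).comap_le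

theorem comap_pastSigma {Ω Ω' : Type*} (η : ℕ → Ω' → G) (φ : Ω → Ω') (k : ℕ) :
    MeasurableSpace.comap φ (pastSigma η k) = pastSigma (fun m => η m ∘ φ) k := by
  simp only [pastSigma, MeasurableSpace.comap_iSup, MeasurableSpace.comap_comp]

end PastSigma

namespace IsSolution

variable {G Ω : Type*} [Group G] [MeasurableSpace G] [MeasurableSpace Ω] {P : Measure Ω}
  {μk : ℕ → Measure G} {η ξ : ℕ → Ω → G}

theorem cond [IsFiniteMeasure P] (hsol : IsSolution P μk η ξ) {s : Set Ω}
    (hs : ∀ k, MeasurableSet[pastSigma η k] s) (hPs : P s ≠ 0) :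
    IsSolution P[|s] μk η ξ := by
  obtain ⟨hη, hξ, heq, hind, hlaw⟩ := hsol
  have hpast := pastSigma_le hη
  refine ⟨hη, hξ, fun k => (heq k).filter_mono cond_absolutelyContinuous.ae_le,
    fun k => (hind k).cond_of_measurableSet_right (hpast _) (hs _) hPs, fun k => ?_⟩
  ext t ht
  rw [Measure.map_apply (hξ k) ht,
    (hind k).cond_apply_eq (hpast _) ⟨t, ht, rfl⟩ (hs _) hPs, ← Measure.map_apply (hξ k) ht,
    hlaw k]

theorem map [MeasurableMul₂ G] [MeasurableEq G] (hsol : IsSolution P μk η ξ)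
    {Ω' : Type*} [MeasurableSpace Ω'] {φ : Ω → Ω'} (hφ : Measurable φ) {η' ξ' : ℕ → Ω' → G}
    (hη' : ∀ k, Measurable (η' k)) (hξ' : ∀ k, Measurable (ξ' k))
    (hη'φ : ∀ k, η' k ∘ φ = η k) (hξ'φ : ∀ k, ξ' k ∘ φ = ξ k) :
    IsSolution (P.map φ) μk η' ξ' := by
  obtain ⟨-, -, heq, hind, hlaw⟩ := hsol
  refine ⟨hη', hξ', fun k => ?_, fun k => ?_, fun k => ?_⟩
  · refine (ae_map_iff hφ.aemeasurable
      (measurableSet_eq_fun (hη' k) ((hξ' k).mul (hη' (k + 1))))).2 ?_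
    filter_upwards [heq k] with x hx
    rw [← hη'φ, ← hη'φ, ← hξ'φ] at hx
    exact hx
  · refine indep_map_of_indep_comap hφ (hξ' k).comap_le (pastSigma_le hη' _) ?_
    have hξ_comap : (MeasurableSpace.comap (ξ' k) ‹MeasurableSpace G›).comap φ =
        MeasurableSpace.comap (ξ k) ‹_› := by
      rw [MeasurableSpace.comap_comp, hξ'φ]
    have hpast_comap : (pastSigma η' (k + 1)).comap φ = pastSigma η (k + 1) := by
      rw [comap_pastSigma, show (fun m => η' m ∘ φ) = η from funext hη'φ]
    rw [hξ_comap, hpast_comap]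
    exact hind k
  · rw [Measure.map_map (hξ' k) hφ, hξ'φ, hlaw k]

/-- `solutionLaws` only admits sample spaces in `Type`, so a solution on an arbitrary `Ω` is
transported to `ℝ` through a measurable embedding of the path space of `(η, ξ)`. -/
theorem map_mem_solutionLaws [StandardBorelSpace G] [MeasurableMul₂ G] [IsProbabilityMeasure P]
    (hsol : IsSolution P μk η ξ) : P.map (fun x k => η k x) ∈ solutionLaws μk := by
  obtain ⟨φ, hφ, X', hX', hX'φ⟩ :=
    exists_measurable_factor_through_real fun k => (hsol.1 k).prodMk (hsol.2.1 k)
  refine ⟨ℝ, inferInstance, P.map φ, fun k => Prod.fst ∘ X' k, fun k => Prod.snd ∘ X' k,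
    Measure.isProbabilityMeasure_map hφ.aemeasurable,
    hsol.map hφ (fun k => measurable_fst.comp (hX' k)) (fun k => measurable_snd.comp (hX' k))
      (fun k => by rw [Function.comp_assoc, hX'φ k]; rfl)
      (fun k => by rw [Function.comp_assoc, hX'φ k]; rfl), ?_⟩
  rw [Measure.map_map (measurable_pi_lambda _ fun k => measurable_fst.comp (hX' k)) hφ]
  congr 1
  ext x k
  exact (congrArg Prod.fst (congrFun (hX'φ k) x)).symm

end IsSolution

/-- If the tail σ-field `F^η_{-∞} = ⋂_k σ(η_m : m ≤ k)` of a solution is not trivial,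
then the law of `(η_k)` is not an extremal point of `P_μ`: it is a nontrivial convex
combination `c P₁ + (1-c) P₂` of two distinct laws of solutions. -/
theorem not_extremal_of_tail_not_trivial
    {G : Type*} [Group G] [TopologicalSpace G] [IsTopologicalGroup G]
    [CompactSpace G] [T2Space G] [SecondCountableTopology G]
    [MeasurableSpace G] [BorelSpace G]
    {Ω : Type*} [MeasurableSpace Ω] (P : Measure Ω) [IsProbabilityMeasure P]
    (μk : ℕ → Measure G) (η ξ : ℕ → Ω → G)
    (hsol : IsSolution P μk η ξ)
    (htail : ∃ s, MeasurableSet[⨅ k, pastSigma η k] s ∧ P s ≠ 0 ∧ P s ≠ 1) :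
    ∃ P₁ ∈ solutionLaws μk, ∃ P₂ ∈ solutionLaws μk, ∃ c : ℝ≥0∞,
      0 < c ∧ c < 1 ∧ P₁ ≠ P₂ ∧
      P.map (fun x (k : ℕ) => η k x) = c • P₁ + (1 - c) • P₂ := by
  obtain ⟨s, hs_tail, hs0, hs1⟩ := htail
  have hs : ∀ k, MeasurableSet[pastSigma η k] s := fun k => iInf_le (pastSigma η) k s hs_tail
  have hsm : MeasurableSet s := pastSigma_le hsol.1 0 s (hs 0)
  have hsc0 : P sᶜ ≠ 0 := (prob_compl_eq_zero_iff hsm).not.2 hs1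
  have := PolishSpace.of_compactSpace G
  have := cond_isProbabilityMeasure hs0
  have := cond_isProbabilityMeasure hsc0
  have hpath : Measurable fun x (k : ℕ) => η k x := measurable_pi_lambda _ hsol.1
  refine ⟨_, (hsol.cond hs hs0).map_mem_solutionLaws, _,
    (hsol.cond (fun k => (hs k).compl) hsc0).map_mem_solutionLaws, P s,
    pos_iff_ne_zero.2 hs0, prob_le_one.lt_of_ne hs1,
    map_cond_ne_map_cond_compl hpath (pastSigma_le_comap_pi η 0 s (hs 0)) hs0, ?_⟩
  rw [← prob_compl_eq_one_sub hsm, ← Measure.map_smul, ← Measure.map_smul,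
    ← Measure.map_add _ _ hpath, measure_smul_cond_add_measure_smul_cond_compl hsm]
end

section
/- Let {(η_k),(ξ_k)} be a solution of η_k = ξ_k η_{k-1} on a compact group G whose tail σ-field F^η_{-∞} = ⋂_k σ(η_m : m ≤ k) is trivial. Then the law of (η_k) is an extremal point of the convex set P_μ of laws of solutions. -/
open MeasureTheory ProbabilityTheory

open scoped ENNReal

/-!
Let `Q` be the law of `η` and `P₁ ≪ Q` another solution law, with density `D = dP₁/dQ`. Both are
Markov with the same transition kernels, so for every `j` the density `D` agrees `Q`-a.e. with its
`j`-fold average over the kernels, a function of the past `(η_j, η_{j+1}, …)` alone. The limsup of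
these averages is a tail-measurable version of `D`; by tail triviality it is a.e. constant, equal
to `∫ D dQ = 1`, so `P₁ = Q`. Absolute continuity comes from `Q = c P₁ + (1 - c) P₂` with `c ≠ 0`.
-/

open Filter

namespace StochasticEquation

section Sequences

variable {α : Type*}

def shift (j : ℕ) (y : ℕ → α) : ℕ → α := fun i => y (i + j)

def cons (a : α) (y : ℕ → α) : ℕ → α := fun i => Nat.casesOn i a y

@[simp]
lemma shift_apply (j i : ℕ) (y : ℕ → α) : shift j y i = y (i + j) := rfl

lemma shift_shift (a b : ℕ) (y : ℕ → α) : shift a (shift b y) = shift (a + b) y := by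
  funext i; simp [shift, Nat.add_assoc]

lemma shift_eq_cons (j : ℕ) (y : ℕ → α) : shift j y = cons (y j) (shift (j + 1) y) := by
  funext i
  cases i with
  | zero => simp [shift, cons]
  | succ n => simp only [shift, cons]; congr 1; omega

variable [MeasurableSpace α]

@[fun_prop]
lemma measurable_shift (j : ℕ) : Measurable (shift (α := α) j) :=
  measurable_pi_lambda _ fun i => measurable_pi_apply (i + j)

@[fun_prop]
lemma measurable_cons : Measurable fun p : α × (ℕ → α) => cons p.1 p.2 := by
  refine measurable_pi_lambda _ fun i => ?_
  cases i with
  | zero => exact measurable_fst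
  | succ n => exact (measurable_pi_apply n).comp measurable_snd

end Sequences

section PastSigma

variable {G Ω : Type*} [MeasurableSpace G] {f : ℕ → Ω → G} {k : ℕ}

lemma measurable_pastSigma {m : ℕ} (hkm : k ≤ m) : Measurable[pastSigma f k] (f m) :=
  measurable_iff_comap_le.2 (le_iSup₂_of_le m hkm le_rfl)

lemma measurable_shift_pastSigma {j : ℕ} (hkj : k ≤ j) :
    Measurable[pastSigma f k] fun x => shift j fun n => f n x :=
  @measurable_pi_lambda _ _ _ (pastSigma f k) _ _ fun _ =>
    measurable_pastSigma (Nat.le_add_left_of_le hkj)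

lemma pastSigma_le [MeasurableSpace Ω] (hf : ∀ n, Measurable (f n)) :
    pastSigma f k ≤ ‹MeasurableSpace Ω› :=
  iSup₂_le fun n _ => (hf n).comap_le

lemma comap_pastSigma {Ω' : Type*} (g : Ω' → Ω) :
    (pastSigma f k).comap g = pastSigma (fun n => f n ∘ g) k := by
  simp only [pastSigma, MeasurableSpace.comap_iSup, MeasurableSpace.comap_comp]

end PastSigma

section Transition

variable {G : Type*} [Group G] [MeasurableSpace G]

noncomputable def transition (μ : Measure G) (φ : (ℕ → G) → ℝ≥0∞) (w : ℕ → G) : ℝ≥0∞ :=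
  ∫⁻ u, φ (cons (u * w 0) w) ∂μ

/-- `transitionIter μk φ j w` is the conditional expectation of `φ (η_0, η_1, …)` given
`(η_j, η_{j+1}, …) = w`. -/
noncomputable def transitionIter (μk : ℕ → Measure G) (φ : (ℕ → G) → ℝ≥0∞) :
    ℕ → (ℕ → G) → ℝ≥0∞
  | 0 => φ
  | j + 1 => transition (μk j) (transitionIter μk φ j)

/-- The Markov property of a path law `ν`, in integrated form: given `(y_{j+1}, y_{j+2}, …)`, the
coordinate `y_j` is distributed as `u * y_{j+1}` with `u ∼ μk j`. -/
def HasTransitions (μk : ℕ → Measure G) (ν : Measure (ℕ → G)) : Prop :=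
  ∀ j (φ χ : (ℕ → G) → ℝ≥0∞), Measurable φ → Measurable χ →
    ∫⁻ y, φ (shift j y) * χ (shift (j + 1) y) ∂ν =
      ∫⁻ y, transition (μk j) φ (shift (j + 1) y) * χ (shift (j + 1) y) ∂ν

variable {μk : ℕ → Measure G} {Ω : Type*} [MeasurableSpace Ω] {P : Measure Ω}
  {η ξ : ℕ → Ω → G}

lemma _root_.IsSolution.isProbabilityMeasure [IsProbabilityMeasure P] (hs : IsSolution P μk η ξ)
    (i : ℕ) : IsProbabilityMeasure (μk i) :=
  hs.2.2.2.2 i ▸ Measure.isProbabilityMeasure_map (hs.2.1 i).aemeasurable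

lemma _root_.IsSolution.isProbabilityMeasure_map [IsProbabilityMeasure P]
    (hs : IsSolution P μk η ξ) : IsProbabilityMeasure (P.map fun x k => η k x) :=
  Measure.isProbabilityMeasure_map (measurable_pi_lambda _ hs.1).aemeasurable

lemma _root_.IsSolution.indepFun_shift (hs : IsSolution P μk η ξ) (j : ℕ) :
    IndepFun (ξ j) (fun x => shift (j + 1) fun n => η n x) P :=
  (IndepFun_iff_Indep _ _ _).2 <|
    indep_of_indep_of_le_right (hs.2.2.2.1 j) (measurable_shift_pastSigma le_rfl).comap_le

variable [MeasurableMul₂ G] {φ : (ℕ → G) → ℝ≥0∞}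

lemma measurable_transition (μ : Measure G) [SFinite μ] (hφ : Measurable φ) :
    Measurable (transition μ φ) := by
  have : Measurable fun p : G × (ℕ → G) => φ (cons (p.1 * p.2 0) p.2) := by fun_prop
  exact this.lintegral_prod_left'

lemma measurable_transitionIter [∀ i, SFinite (μk i)] (hφ : Measurable φ) :
    ∀ j, Measurable (transitionIter μk φ j)
  | 0 => hφ
  | j + 1 => measurable_transition (μk j) (measurable_transitionIter hφ j)

lemma HasTransitions.lintegral_mul_comp_shift [∀ i, SFinite (μk i)] {ν : Measure (ℕ → G)}
    (hν : HasTransitions μk ν) (hφ : Measurable φ) (k : ℕ) {χ : (ℕ → G) → ℝ≥0∞}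
    (hχ : Measurable χ) :
    ∫⁻ y, φ y * χ (shift k y) ∂ν =
      ∫⁻ y, transitionIter μk φ k (shift k y) * χ (shift k y) ∂ν := by
  induction k generalizing χ with
  | zero => rfl
  | succ k ih =>
    have hsh : ∀ y, (χ ∘ shift 1) (shift k y) = χ (shift (k + 1) y) := fun y => by
      simp [shift_shift, Nat.add_comm]
    calc ∫⁻ y, φ y * χ (shift (k + 1) y) ∂ν
        = ∫⁻ y, φ y * (χ ∘ shift 1) (shift k y) ∂ν := by simp only [hsh]
      _ = ∫⁻ y, transitionIter μk φ k (shift k y) * (χ ∘ shift 1) (shift k y) ∂ν :=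
        ih (hχ.comp (measurable_shift 1))
      _ = _ := by simp only [hsh]; exact hν k _ _ (measurable_transitionIter hφ k) hχ

lemma _root_.IsSolution.hasTransitions [IsProbabilityMeasure P] (hs : IsSolution P μk η ξ) :
    HasTransitions μk (P.map fun x k => η k x) := by
  unfold HasTransitions
  intro j φ χ hφ hχ
  have := hs.isProbabilityMeasure j
  have hind := hs.indepFun_shift
  obtain ⟨hη, hξ, heq, -, hlaw⟩ := hs
  have hpath : Measurable fun x k => η k x := measurable_pi_lambda _ hη
  set W : Ω → ℕ → G := fun x => shift (j + 1) fun n => η n x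
  have hW : Measurable W := (measurable_shift _).comp hpath
  set F : G × (ℕ → G) → ℝ≥0∞ := fun p => φ (cons (p.1 * p.2 0) p.2) * χ p.2
  have hF : Measurable F := by fun_prop
  calc ∫⁻ y, φ (shift j y) * χ (shift (j + 1) y) ∂(P.map fun x k => η k x)
      = ∫⁻ x, F (ξ j x, W x) ∂P := by
        rw [lintegral_map (by fun_prop) hpath]
        refine lintegral_congr_ae ?_
        filter_upwards [heq j] with x hx
        simp only [F, W, shift_eq_cons j, hx, shift_apply, zero_add]
    _ = ∫⁻ p, F p ∂(μk j).prod (P.map W) := by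
        rw [← hlaw j, ← (indepFun_iff_map_prod_eq_prod_map_map (hξ j).aemeasurable
          hW.aemeasurable).1 (hind j), lintegral_map hF ((hξ j).prodMk hW)]
    _ = ∫⁻ w, transition (μk j) φ w * χ w ∂P.map W := by
        rw [lintegral_prod_symm _ hF.aemeasurable]
        refine lintegral_congr fun w => ?_
        exact lintegral_mul_const (χ w) (by fun_prop)
    _ = _ := by
        have hg : Measurable fun w => transition (μk j) φ w * χ w :=
          (measurable_transition _ hφ).mul hχ
        rw [lintegral_map hg hW]
        exact (lintegral_map (hg.comp (measurable_shift _)) hpath).symm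

lemma HasTransitions.lintegral_comp_shift [∀ i, SFinite (μk i)] {ν : Measure (ℕ → G)}
    (hν : HasTransitions μk ν) (hφ : Measurable φ) (k : ℕ) :
    ∫⁻ y, φ y ∂ν = ∫⁻ y, transitionIter μk φ k (shift k y) ∂ν := by
  simpa using hν.lintegral_mul_comp_shift hφ k (χ := 1) measurable_const

/-- Under both `ν` and `ρ`, `φ ↦ transitionIter μk φ j ∘ shift j` is the conditional expectation
given `shift j`; being self-adjoint under `ρ` and preserving `ν`-integrals, it fixes `dν/dρ`. -/
lemma HasTransitions.transitionIter_rnDeriv_ae_eq [∀ i, SFinite (μk i)]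
    {ν ρ : Measure (ℕ → G)} [SigmaFinite ν] [SigmaFinite ρ]
    (hν : HasTransitions μk ν) (hρ : HasTransitions μk ρ) (hνρ : ν ≪ ρ) (j : ℕ) :
    (fun y => transitionIter μk (ν.rnDeriv ρ) j (shift j y)) =ᵐ[ρ] ν.rnDeriv ρ := by
  have hD := Measure.measurable_rnDeriv ν ρ
  have hDj := measurable_transitionIter (μk := μk) hD j
  refine ae_eq_of_forall_setLIntegral_eq_of_sigmaFinite (hDj.comp (measurable_shift j)) hD
    fun s hs _ => ?_
  set b : (ℕ → G) → ℝ≥0∞ := s.indicator 1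
  have hb : Measurable b := measurable_one.indicator hs
  have hbj := measurable_transitionIter (μk := μk) hb j
  calc ∫⁻ y in s, transitionIter μk (ν.rnDeriv ρ) j (shift j y) ∂ρ
      = ∫⁻ y, b y * transitionIter μk (ν.rnDeriv ρ) j (shift j y) ∂ρ := by
        rw [← lintegral_indicator hs]
        refine lintegral_congr fun y => ?_
        by_cases hy : y ∈ s <;> simp [b, hy]
    _ = ∫⁻ y, ν.rnDeriv ρ y * transitionIter μk b j (shift j y) ∂ρ := by
        rw [hρ.lintegral_mul_comp_shift hb j hDj, hρ.lintegral_mul_comp_shift hD j hbj]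
        simp only [mul_comm]
    _ = ∫⁻ y, b y ∂ν := by
        rw [lintegral_rnDeriv_mul (f := fun y => transitionIter μk b j (shift j y)) hνρ
          (hbj.comp (measurable_shift j)).aemeasurable,
          hν.lintegral_comp_shift hb j]
    _ = ∫⁻ y in s, ν.rnDeriv ρ y ∂ρ := by
        rw [lintegral_indicator_one hs, Measure.setLIntegral_rnDeriv hνρ]

end Transition

section Tail

variable {G : Type*} [MeasurableSpace G]

abbrev pathTail (G : Type*) [MeasurableSpace G] : MeasurableSpace (ℕ → G) :=
  ⨅ k, pastSigma (fun n (y : ℕ → G) => y n) k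

lemma pathTail_le : pathTail G ≤ MeasurableSpace.pi :=
  iInf_le_of_le 0 (pastSigma_le measurable_pi_apply)

lemma measurableSet_preimage_of_pathTail {Ω : Type*} {η : ℕ → Ω → G} {s : Set (ℕ → G)}
    (hs : MeasurableSet[pathTail G] s) :
    MeasurableSet[⨅ k, pastSigma η k] ((fun x k => η k x) ⁻¹' s) := by
  refine MeasurableSpace.measurableSet_iInf.2 fun k => ?_
  have : MeasurableSet[(pastSigma (fun n (y : ℕ → G) => y n) k).comap fun x k => η k x]
      ((fun x k => η k x) ⁻¹' s) := ⟨s, MeasurableSpace.measurableSet_iInf.1 hs k, rfl⟩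
  rwa [comap_pastSigma] at this

lemma measurable_limsup_pathTail [Group G] [MeasurableMul₂ G] {μk : ℕ → Measure G}
    [∀ i, SFinite (μk i)] {φ : (ℕ → G) → ℝ≥0∞} (hφ : Measurable φ) :
    Measurable[pathTail G] fun y => limsup (fun j => transitionIter μk φ j (shift j y)) atTop := by
  refine measurable_iff_comap_le.2 (le_iInf fun k => measurable_iff_comap_le.1 ?_)
  have hk : (fun y => limsup (fun j => transitionIter μk φ j (shift j y)) atTop) =
      fun y => limsup (fun j => transitionIter μk φ (j + k) (shift (j + k) y)) atTop :=
    funext fun y => (limsup_nat_add _ k).symm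
  rw [hk]
  exact @Measurable.limsup _ _ _ _ _ (pastSigma _ k) _ _ _ _ fun j =>
    (measurable_transitionIter hφ _).comp (measurable_shift_pastSigma (Nat.le_add_left k j))

end Tail

lemma ae_eq_const_of_lintegral_eq {α : Type*} {m m0 : MeasurableSpace α} {μ : Measure α}
    [IsProbabilityMeasure μ] (hm : m ≤ m0) (htriv : ∀ s, MeasurableSet[m] s → μ s = 0 ∨ μ s = 1)
    {f : α → ℝ≥0∞} (hf : Measurable[m] f) {c : ℝ≥0∞} (hc : c ≠ ∞) (hfc : ∫⁻ x, f x ∂μ = c) :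
    f =ᵐ[μ] fun _ => c := by
  have hae : ∀ s, MeasurableSet[m] s → μ s ≠ 0 → ∀ᵐ x ∂μ, x ∈ s := fun s hs h0 =>
    (mem_ae_iff_prob_eq_one (hm s hs)).2 ((htriv s hs).resolve_left h0)
  have hge : ∀ᵐ x ∂μ, ¬ f x < c := by
    refine (measure_eq_zero_iff_ae_notMem (s := {x | f x < c})).1 ?_
    by_contra h
    have := lintegral_strict_mono (IsProbabilityMeasure.ne_zero μ) aemeasurable_const
      (hfc ▸ hc) (hae _ (hf measurableSet_Iio) h)
    simp [hfc] at this
  have hle : ∀ᵐ x ∂μ, ¬ c < f x := by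
    refine (measure_eq_zero_iff_ae_notMem (s := {x | c < f x})).1 ?_
    by_contra h
    have := lintegral_strict_mono (IsProbabilityMeasure.ne_zero μ) (hf.mono hm le_rfl).aemeasurable
      (by simpa using hc) (hae _ (hf measurableSet_Ioi) h)
    simp [hfc] at this
  filter_upwards [hge, hle] with x h₁ h₂ using le_antisymm (not_lt.1 h₂) (not_lt.1 h₁)

/-- The limsup of the a.e. constant sequence `transitionIter μk D j ∘ shift j` is a
tail-measurable version of `D = dν/dρ`. -/
theorem HasTransitions.eq_of_absolutelyContinuous {G : Type*} [Group G] [MeasurableSpace G]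
    [MeasurableMul₂ G] {μk : ℕ → Measure G} [∀ i, SFinite (μk i)] {ν ρ : Measure (ℕ → G)}
    [IsProbabilityMeasure ν] [IsProbabilityMeasure ρ] (hν : HasTransitions μk ν)
    (hρ : HasTransitions μk ρ) (htail : ∀ s, MeasurableSet[pathTail G] s → ρ s = 0 ∨ ρ s = 1)
    (hνρ : ν ≪ ρ) : ν = ρ := by
  set D' := fun y => limsup (fun j => transitionIter μk (ν.rnDeriv ρ) j (shift j y)) atTop
  have hD' : D' =ᵐ[ρ] ν.rnDeriv ρ := by
    filter_upwards [ae_all_iff.2 (hν.transitionIter_rnDeriv_ae_eq hρ hνρ)] with y hy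
    simp only [D', hy, limsup_const]
  have hint : ∫⁻ y, D' y ∂ρ = 1 := by
    rw [lintegral_congr_ae hD', Measure.lintegral_rnDeriv hνρ, measure_univ]
  have hone := ae_eq_const_of_lintegral_eq pathTail_le htail
    (measurable_limsup_pathTail (Measure.measurable_rnDeriv ν ρ)) ENNReal.one_ne_top hint
  calc ν = ρ.withDensity (ν.rnDeriv ρ) := (Measure.withDensity_rnDeriv_eq ν ρ hνρ).symm
    _ = ρ.withDensity 1 := withDensity_congr_ae (hD'.symm.trans hone)
    _ = ρ := withDensity_one

end StochasticEquation

open StochasticEquation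

theorem extremal_of_tail_trivial_general
    {G : Type*} [Group G] [TopologicalSpace G] [IsTopologicalGroup G]
    [SecondCountableTopology G]
    [MeasurableSpace G] [BorelSpace G]
    {Ω : Type*} [MeasurableSpace Ω] (P : Measure Ω) [IsProbabilityMeasure P]
    (μk : ℕ → Measure G) (η ξ : ℕ → Ω → G)
    (hsol : IsSolution P μk η ξ)
    (htail : ∀ s, MeasurableSet[⨅ k, pastSigma η k] s → P s = 0 ∨ P s = 1) :
    ∀ P₁ ∈ solutionLaws μk, ∀ P₂ ∈ solutionLaws μk, ∀ c : ℝ≥0∞,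
      0 < c → c < 1 →
      P.map (fun x (k : ℕ) => η k x) = c • P₁ + (1 - c) • P₂ →
      P₁ = P.map (fun x (k : ℕ) => η k x) ∧ P₂ = P.map (fun x (k : ℕ) => η k x) := by
  intro P₁ hP₁ P₂ hP₂ c hc₀ hc₁ hP
  have := hsol.isProbabilityMeasure
  have := hsol.isProbabilityMeasure_map
  have hQtail : ∀ s, MeasurableSet[pathTail G] s → P.map (fun x k => η k x) s = 0 ∨
      P.map (fun x k => η k x) s = 1 := fun s hs => by
    rw [Measure.map_apply (measurable_pi_lambda _ hsol.1) (pathTail_le s hs)]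
    exact htail _ (measurableSet_preimage_of_pathTail hs)
  have hextreme : ∀ R ∈ solutionLaws μk, R ≪ P.map (fun x k => η k x) →
      R = P.map (fun x k => η k x) := by
    rintro R ⟨Ω', _, P', η', ξ', _, hsol', rfl⟩ hR
    have := hsol'.isProbabilityMeasure_map
    exact hsol'.hasTransitions.eq_of_absolutelyContinuous hsol.hasTransitions hQtail hR
  refine ⟨hextreme P₁ hP₁ ?_, hextreme P₂ hP₂ ?_⟩ <;> rw [hP]
  · exact (Measure.absolutelyContinuous_smul hc₀.ne').add_right _
  · rw [add_comm]
    exact (Measure.absolutelyContinuous_smul (tsub_pos_of_lt hc₁).ne').add_right _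

/-- If the tail σ-field `F^η_{-∞} = ⋂_k σ(η_m : m ≤ k)` of a solution is trivial, then
the law of `(η_k)` is an extremal point of the convex set `P_μ` of laws of solutions. -/
theorem extremal_of_tail_trivial
    {G : Type*} [Group G] [TopologicalSpace G] [IsTopologicalGroup G]
    [CompactSpace G] [T2Space G] [SecondCountableTopology G]
    [MeasurableSpace G] [BorelSpace G]
    {Ω : Type*} [MeasurableSpace Ω] (P : Measure Ω) [IsProbabilityMeasure P]
    (μk : ℕ → Measure G) (η ξ : ℕ → Ω → G)
    (hsol : IsSolution P μk η ξ)
    (htail : ∀ s, MeasurableSet[⨅ k, pastSigma η k] s → P s = 0 ∨ P s = 1) :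
    ∀ P₁ ∈ solutionLaws μk, ∀ P₂ ∈ solutionLaws μk, ∀ c : ℝ≥0∞,
      0 < c → c < 1 →
      P.map (fun x (k : ℕ) => η k x) = c • P₁ + (1 - c) • P₂ →
      P₁ = P.map (fun x (k : ℕ) => η k x) ∧ P₂ = P.map (fun x (k : ℕ) => η k x) :=
  extremal_of_tail_trivial_general P μk η ξ hsol htail
end
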